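/- For every real number p with 2 < p < 3 there exists a constant C > 0 such that for all real numbers a and b, ||b|^{p-2} b - |a|^{p-2} a - (p-1)|a|^{p-2}(b-a)| ≤ C |b - a|^{p-1}. -/

import Mathlib

/-!
The derivative of `t ↦ |t|^(p-2) t` is `(p-1)|t|^(p-2)`, and `t ↦ |t|^s` is `s`-Hölder with
constant `1` for `0 ≤ s ≤ 1` because `(x + y)^s ≤ x^s + y^s`. By the mean value theorem the
first-order Taylor remainder at `a` is then at most `(p-1)|b-a|^(p-2) · |b-a|`.
-/

open Real Set Filter Asymptotics Topology

lemma abs_rpow_le_abs_rpow_add_abs_sub_rpow {s : ℝ} (hs0 : 0 ≤ s) (hs1 : s ≤ 1) (x y : ℝ) :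
    |x| ^ s ≤ |y| ^ s + |x - y| ^ s :=
  calc |x| ^ s ≤ (|y| + |x - y|) ^ s :=
        rpow_le_rpow (abs_nonneg x) (by linarith [abs_sub_abs_le_abs_sub x y]) hs0
    _ ≤ |y| ^ s + |x - y| ^ s := rpow_add_le_add_rpow (abs_nonneg _) (abs_nonneg _) hs0 hs1

lemma abs_abs_rpow_sub_abs_rpow_le {s : ℝ} (hs0 : 0 ≤ s) (hs1 : s ≤ 1) (x y : ℝ) :
    |(|x| ^ s - |y| ^ s)| ≤ |x - y| ^ s := by
  have hxy := abs_rpow_le_abs_rpow_add_abs_sub_rpow hs0 hs1 x y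
  have hyx := abs_rpow_le_abs_rpow_add_abs_sub_rpow hs0 hs1 y x
  rw [abs_sub_comm y x] at hyx
  exact abs_sub_le_iff.2 ⟨by linarith, by linarith⟩

lemma hasDerivAt_abs_rpow_mul_self {r : ℝ} (hr : 0 < r) (x : ℝ) :
    HasDerivAt (fun t : ℝ => |t| ^ r * t) ((r + 1) * |x| ^ r) x := by
  rcases eq_or_ne x 0 with rfl | hx
  · rw [hasDerivAt_iff_isLittleO_nhds_zero]
    have hlim : Tendsto (fun h : ℝ => |h| ^ r) (𝓝 0) (𝓝 0) := by
      simpa [zero_rpow hr.ne'] using (continuous_abs.tendsto (0 : ℝ)).rpow_const (Or.inr hr.le)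
    simpa [zero_rpow hr.ne'] using (isLittleO_one_iff ℝ).2 hlim |>.mul_isBigO (isBigO_refl id _)
  · have hx' : |x| ≠ 0 := abs_ne_zero.2 hx
    refine (((hasDerivAt_abs hx).rpow_const (Or.inl hx')).mul (hasDerivAt_id x)).congr_deriv ?_
    rw [rpow_sub_one hx', id, mul_one, mul_comm _ x, ← mul_assoc, ← mul_assoc, mul_comm x,
      sign_mul_self]
    field_simp

theorem abs_abs_rpow_mul_self_sub_taylor_le {r : ℝ} (hr0 : 0 < r) (hr1 : r ≤ 1) (a b : ℝ) :
    |(|b| ^ r * b - |a| ^ r * a - (r + 1) * |a| ^ r * (b - a))| ≤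
      (r + 1) * |b - a| ^ (r + 1) := by
  have hderiv (t : ℝ) : HasDerivAt (fun t : ℝ => |t| ^ r * t - (r + 1) * |a| ^ r * t)
      ((r + 1) * (|t| ^ r - |a| ^ r)) t :=
    ((hasDerivAt_abs_rpow_mul_self hr0 t).sub
      ((hasDerivAt_id t).const_mul ((r + 1) * |a| ^ r))).congr_deriv (by ring)
  have hbound : ∀ t ∈ uIcc a b, ‖(r + 1) * (|t| ^ r - |a| ^ r)‖ ≤ (r + 1) * |b - a| ^ r := by
    intro t ht
    rw [norm_mul, Real.norm_of_nonneg (by linarith), norm_eq_abs]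
    gcongr
    calc |(|t| ^ r - |a| ^ r)| ≤ |t - a| ^ r := abs_abs_rpow_sub_abs_rpow_le hr0.le hr1 t a
      _ ≤ |b - a| ^ r := rpow_le_rpow (abs_nonneg _) (abs_sub_left_of_mem_uIcc ht) hr0.le
  have := (convex_uIcc a b).norm_image_sub_le_of_norm_hasDerivWithin_le
    (fun t _ => (hderiv t).hasDerivWithinAt) hbound left_mem_uIcc right_mem_uIcc
  rw [norm_eq_abs, norm_eq_abs] at this
  rw [rpow_add_one' (abs_nonneg _) (by linarith), ← mul_assoc]
  convert this using 2
  ring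

/-- For every real `p` with `2 < p < 3` there is `C > 0` such that for all `a b : ℝ`,
`||b|^{p-2} b - |a|^{p-2} a - (p-1)|a|^{p-2}(b-a)| ≤ C |b - a|^{p-1}`. -/
theorem stmt2 (p : ℝ) (hp : 2 < p) (hp' : p < 3) :
    ∃ C > (0:ℝ), ∀ a b : ℝ,
      abs (|b| ^ (p - 2) * b - |a| ^ (p - 2) * a - (p - 1) * |a| ^ (p - 2) * (b - a)) ≤
        C * |b - a| ^ (p - 1) := by
  refine ⟨p - 1, by linarith, fun a b => ?_⟩
  have h := abs_abs_rpow_mul_self_sub_taylor_le (r := p - 2) (by linarith) (by linarith) a b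
  rwa [show p - 2 + 1 = p - 1 by ring] at h
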